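/- arXiv:2305.09708 — 2 statements merged into one kernel-verified Lean document; each statement's English description precedes it below -/
import Mathlib

section
/- Let Ω be a finite set, F_1,...,F_n : Ω → ℝ, and let E be the exponential family of probability functions p_θ(x) = exp(C(x) + ∑_i θ_i F_i(x) − ψ(θ)) for θ ∈ ℝ^n, where ψ(θ) = log ∑_{x∈Ω} exp(C(x) + ∑_i θ_i F_i(x)). Let A_E be the span of F_1,...,F_n and the constant function 1. If X ∈ A_E satisfies E_{p}(X) = 0 for all p ∈ E, then X = 0. -/
open Finset

/-- The exponential family density `p_θ(x) = exp(C(x) + ∑ᵢ θᵢ Fᵢ(x) − ψ(θ))`, where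
`ψ(θ) = log ∑ₓ exp(C(x) + ∑ᵢ θᵢ Fᵢ(x))` is the log-partition function. -/
noncomputable def expFamDensity {m n : ℕ} (C : Fin m → ℝ) (F : Fin n → Fin m → ℝ)
    (θ : Fin n → ℝ) (x : Fin m) : ℝ :=
  Real.exp (C x + ∑ i, θ i * F i x -
    Real.log (∑ y, Real.exp (C y + ∑ i, θ i * F i y)))

/-- if `X` belongs to the span `A_E` of `F₁,…,Fₙ` and the constant function `1`
(which are linearly independent), and `E_p(X) = 0` for every member `p` of the exponential
family `E`, then `X = 0`. -/
theorem eq_zero_of_expectation_eq_zero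
    {m n : ℕ} (C : Fin m → ℝ) (F : Fin n → Fin m → ℝ)
    (hindep : LinearIndependent ℝ (Fin.cons (fun _ => (1 : ℝ)) F : Fin (n + 1) → Fin m → ℝ))
    (X : Fin m → ℝ) (a₀ : ℝ) (a : Fin n → ℝ)
    (hX : X = fun x => a₀ + ∑ i, a i * F i x)
    (hzero : ∀ θ : Fin n → ℝ, ∑ x, X x * expFamDensity C F θ x = 0) :
    X = 0 := by

  have key : ∀ θ : Fin n → ℝ, ∑ x, X x * Real.exp (C x + ∑ i, θ i * F i x) = 0 := by
    intro θ
    have h := hzero θ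
    simp only [expFamDensity, Real.exp_sub, ← mul_div_assoc] at h
    rw [← Finset.sum_div, div_eq_zero_iff] at h
    exact h.resolve_right (Real.exp_ne_zero _)
  have hcomb : ∑ x, (X x * Real.exp (C x)) * (Real.exp (X x) - Real.exp (-(X x))) = 0 := by
    have heq : ∑ x, (X x * Real.exp (C x)) * (Real.exp (X x) - Real.exp (-(X x)))
        = Real.exp a₀ * ∑ x, X x * Real.exp (C x + ∑ i, a i * F i x)
          - Real.exp (-a₀) * ∑ x, X x * Real.exp (C x + ∑ i, (-a) i * F i x) := by
      rw [Finset.mul_sum, Finset.mul_sum, ← Finset.sum_sub_distrib]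
      refine Finset.sum_congr rfl fun x _ => ?_
      have hx : X x = a₀ + ∑ i, a i * F i x := by rw [hX]
      have hneg : ∑ i, (-a) i * F i x = -∑ i, a i * F i x := by
        simp [neg_mul, Finset.sum_neg_distrib]
      rw [hneg, hx]
      simp only [Real.exp_add, neg_add, Real.exp_neg]
      field_simp
    rw [heq, key a, key (-a), mul_zero, mul_zero, sub_zero]
  have hnonneg : ∀ x ∈ Finset.univ (α := Fin m),
      0 ≤ (X x * Real.exp (C x)) * (Real.exp (X x) - Real.exp (-(X x))) := by
    intro x _
    have h1 : 0 ≤ X x * (Real.exp (X x) - Real.exp (-(X x))) := by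
      rcases le_or_gt 0 (X x) with h | h
      · have : Real.exp (-(X x)) ≤ Real.exp (X x) := Real.exp_le_exp.mpr (by linarith)
        exact mul_nonneg h (by linarith)
      · have : Real.exp (X x) ≤ Real.exp (-(X x)) := Real.exp_le_exp.mpr (by linarith)
        nlinarith
    calc (0:ℝ) = Real.exp (C x) * 0 := by ring
    _ ≤ Real.exp (C x) * (X x * (Real.exp (X x) - Real.exp (-(X x)))) :=
        mul_le_mul_of_nonneg_left h1 (Real.exp_pos _).le
    _ = (X x * Real.exp (C x)) * (Real.exp (X x) - Real.exp (-(X x))) := by ring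
  have hall := (Finset.sum_eq_zero_iff_of_nonneg hnonneg).mp hcomb
  funext x
  have hx := hall x (Finset.mem_univ x)
  have hx' : X x * (Real.exp (X x) - Real.exp (-(X x))) = 0 := by
    have hc := Real.exp_ne_zero (C x)
    have : Real.exp (C x) * (X x * (Real.exp (X x) - Real.exp (-(X x)))) = 0 := by
      rw [← hx]; ring
    exact (mul_eq_zero.mp this).resolve_left hc
  rcases mul_eq_zero.mp hx' with h | h
  · exact h
  · have : Real.exp (X x) = Real.exp (-(X x)) := by linarith
    have := Real.exp_eq_exp.mp this
    show X x = 0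
    linarith
end

section
/- Let Ω = {x_1,...,x_m} be a finite set, F_1,...,F_n : Ω → ℝ with 1, F_1, ..., F_n linearly independent, and let E be the corresponding exponential family p_θ(x) = exp(C(x) + ∑_i θ_i F_i(x) − ψ(θ)). For X = a_0 + ∑_{i=1}^n a_i F_i in the span A_E, define f : E → ℝ by f(p) = E_p(X). Then the squared norm of the Riemannian gradient of f with respect to the Fisher metric h_F satisfies ‖grad^{h_F}(f)(p)‖² = V_p(X) for all p ∈ E (Cramér–Rao equality). -/
open Finset

/-- The Fisher metric of the exponential family in the natural coordinates `θ`: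
`(h_F)_{ij}(θ) = Cov_{p_θ}(Fᵢ, Fⱼ)`. -/
noncomputable def fisherMatrix {m n : ℕ} (C : Fin m → ℝ) (F : Fin n → Fin m → ℝ)
    (θ : Fin n → ℝ) : Matrix (Fin n) (Fin n) ℝ :=
  Matrix.of fun i j =>
    ∑ x, (F i x - ∑ y, F i y * expFamDensity C F θ y) *
      (F j x - ∑ y, F j y * expFamDensity C F θ y) * expFamDensity C F θ x

/-! In natural coordinates `∂ᵢ E_θ[X] = Cov_θ(X, Fᵢ)`, and for `X = a₀ + ∑ aᵢ Fᵢ` this covariance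
is `(h_F a)ᵢ`. Hence `grad f = a` and `‖grad f‖² = aᵀ h_F a`, which by bilinearity of the covariance
is `Cov_θ(X, X) = V_θ(X)`. Linear independence of `1, F₁, …, Fₙ` makes `h_F` positive definite,
so the inverse metric is a genuine inverse. -/

open Matrix

lemma Matrix.sum_inv_mul_mulVec_mul_mulVec {ι R : Type*} [Fintype ι] [DecidableEq ι] [CommRing R]
    {G : Matrix ι ι R} (hG : IsUnit G.det) (a : ι → R) :
    ∑ i, ∑ j, G⁻¹ i j * (G *ᵥ a) i * (G *ᵥ a) j = a ⬝ᵥ G *ᵥ a :=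
  calc ∑ i, ∑ j, G⁻¹ i j * (G *ᵥ a) i * (G *ᵥ a) j = (G *ᵥ a) ⬝ᵥ G⁻¹ *ᵥ (G *ᵥ a) := by
        generalize G *ᵥ a = u
        simp only [dotProduct, mulVec, Finset.mul_sum]
        exact Finset.sum_congr rfl fun _ _ => Finset.sum_congr rfl fun _ _ => by ring
    _ = (G *ᵥ a) ⬝ᵥ a := by rw [mulVec_mulVec, nonsing_inv_mul G hG, one_mulVec]
    _ = a ⬝ᵥ G *ᵥ a := dotProduct_comm _ _

namespace ExpFamily

section Covariance

variable {Ω ι : Type*} [Fintype Ω] [Fintype ι] (p : Ω → ℝ)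

def mean (X : Ω → ℝ) : ℝ := ∑ x, X x * p x

def cov (X Y : Ω → ℝ) : ℝ := ∑ x, (X x - mean p X) * (Y x - mean p Y) * p x

def covMatrix (F : ι → Ω → ℝ) : Matrix ι ι ℝ := Matrix.of fun i j => cov p (F i) (F j)

variable {p}

lemma cov_comm (X Y : Ω → ℝ) : cov p X Y = cov p Y X :=
  Finset.sum_congr rfl fun _ _ => by ring

lemma cov_self (X : Ω → ℝ) : cov p X X = ∑ x, (X x - mean p X) ^ 2 * p x :=
  Finset.sum_congr rfl fun _ _ => by ring

lemma mean_affine (hp : ∑ x, p x = 1) (a₀ : ℝ) (a : ι → ℝ) (F : ι → Ω → ℝ) :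
    mean p (fun x => a₀ + ∑ i, a i * F i x) = a₀ + ∑ i, a i * mean p (F i) := by
  simp only [mean, add_mul, Finset.sum_add_distrib, ← Finset.mul_sum, hp, mul_one,
    Finset.sum_mul]
  rw [Finset.sum_comm]
  simp only [mul_assoc, ← Finset.mul_sum]

lemma sub_mean_affine (hp : ∑ x, p x = 1) (a₀ : ℝ) (a : ι → ℝ) (F : ι → Ω → ℝ) (x : Ω) :
    a₀ + ∑ i, a i * F i x - mean p (fun x => a₀ + ∑ i, a i * F i x) =
      ∑ i, a i * (F i x - mean p (F i)) := by
  simp only [mean_affine hp, mul_sub, Finset.sum_sub_distrib]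
  ring

lemma cov_affine_left (hp : ∑ x, p x = 1) (a₀ : ℝ) (a : ι → ℝ) (F : ι → Ω → ℝ) (Y : Ω → ℝ) :
    cov p (fun x => a₀ + ∑ i, a i * F i x) Y = ∑ i, a i * cov p (F i) Y := by
  simp only [cov, sub_mean_affine hp, Finset.sum_mul, Finset.mul_sum]
  rw [Finset.sum_comm]
  exact Finset.sum_congr rfl fun _ _ => Finset.sum_congr rfl fun _ _ => by ring

lemma cov_affine_right (hp : ∑ x, p x = 1) (a₀ : ℝ) (a : ι → ℝ) (F : ι → Ω → ℝ) (Y : Ω → ℝ) :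
    cov p Y (fun x => a₀ + ∑ i, a i * F i x) = ∑ i, a i * cov p Y (F i) := by
  simp only [cov_comm Y, cov_affine_left hp]

lemma cov_eq_sum_mul_sub_mean (hp : ∑ x, p x = 1) (X Y : Ω → ℝ) :
    cov p X Y = ∑ x, X x * (Y x - mean p Y) * p x := by
  have hcentered : ∑ x, (Y x - mean p Y) * p x = 0 := by
    simp only [sub_mul, Finset.sum_sub_distrib, ← Finset.mul_sum, hp, mul_one, mean, sub_self]
  calc cov p X Y = ∑ x, X x * (Y x - mean p Y) * p x - mean p X * ∑ x, (Y x - mean p Y) * p x := by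
        rw [cov, Finset.mul_sum, ← Finset.sum_sub_distrib]
        exact Finset.sum_congr rfl fun _ _ => by ring
    _ = _ := by rw [hcentered, mul_zero, sub_zero]

lemma covMatrix_mulVec (hp : ∑ x, p x = 1) (F : ι → Ω → ℝ) (a₀ : ℝ) (a : ι → ℝ) (i : ι) :
    (covMatrix p F *ᵥ a) i = cov p (F i) (fun x => a₀ + ∑ j, a j * F j x) := by
  rw [cov_affine_right hp, mulVec, dotProduct]
  exact Finset.sum_congr rfl fun _ _ => mul_comm _ _

lemma dotProduct_covMatrix_mulVec (hp : ∑ x, p x = 1) (F : ι → Ω → ℝ) (a₀ : ℝ) (a : ι → ℝ) :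
    a ⬝ᵥ covMatrix p F *ᵥ a =
      cov p (fun x => a₀ + ∑ j, a j * F j x) (fun x => a₀ + ∑ j, a j * F j x) := by
  simp only [dotProduct, covMatrix_mulVec hp F a₀, cov_affine_left hp]

end Covariance

lemma covMatrix_posDef {Ω : Type*} [Fintype Ω] {n : ℕ} {p : Ω → ℝ} (hp : ∑ x, p x = 1)
    (hpos : ∀ x, 0 < p x) {F : Fin n → Ω → ℝ}
    (hindep : LinearIndependent ℝ (Fin.cons (fun _ => (1 : ℝ)) F : Fin (n + 1) → Ω → ℝ)) :
    (covMatrix p F).PosDef := by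
  refine .of_dotProduct_mulVec_pos (Matrix.IsHermitian.ext fun i j => cov_comm _ _) ?_
  intro v hv
  rw [star_trivial, dotProduct_covMatrix_mulVec hp F 0, cov_self]
  simp only [zero_add]
  set Y : Ω → ℝ := fun x => ∑ i, v i * F i x
  have hterm_nonneg (x : Ω) : 0 ≤ (Y x - mean p Y) ^ 2 * p x :=
    mul_nonneg (sq_nonneg _) (hpos x).le
  refine (Finset.sum_nonneg fun x _ => hterm_nonneg x).lt_of_ne' fun hzero => hv ?_
  have hconst (x : Ω) : Y x = mean p Y := by
    have := (Finset.sum_eq_zero_iff_of_nonneg fun x _ => hterm_nonneg x).mp hzero x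
      (Finset.mem_univ x)
    simpa [sub_eq_zero, (hpos x).ne'] using this
  have hdep : ∑ k, (Fin.cons (-mean p Y) v : Fin (n + 1) → ℝ) k •
      (Fin.cons (fun _ => (1 : ℝ)) F : Fin (n + 1) → Ω → ℝ) k = 0 := by
    funext x
    simp only [Finset.sum_apply, Pi.smul_apply, Fin.sum_univ_succ, Fin.cons_zero, Fin.cons_succ,
      smul_eq_mul, mul_one, Pi.zero_apply, ← hconst x]
    exact neg_add_cancel (Y x)
  exact funext fun i => by simpa using Fintype.linearIndependent_iff.mp hindep _ hdep i.succ

section Density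

variable {m n : ℕ} (C : Fin m → ℝ) (F : Fin n → Fin m → ℝ)

def statPairing (x : Fin m) : (Fin n → ℝ) →L[ℝ] ℝ := ∑ i, F i x • ContinuousLinearMap.proj i

lemma statPairing_apply (x : Fin m) (θ : Fin n → ℝ) : statPairing F x θ = ∑ i, θ i * F i x := by
  simp [statPairing, mul_comm]

lemma hasFDerivAt_exponent (θ : Fin n → ℝ) (x : Fin m) :
    HasFDerivAt (fun θ : Fin n → ℝ => C x + ∑ i, θ i * F i x) (statPairing F x) θ := by
  simpa only [statPairing_apply] using (statPairing F x).hasFDerivAt.const_add (C x)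

lemma expFamDensity_pos (θ : Fin n → ℝ) (x : Fin m) : 0 < expFamDensity C F θ x :=
  Real.exp_pos _

lemma fisherMatrix_eq_covMatrix (θ : Fin n → ℝ) :
    fisherMatrix C F θ = covMatrix (expFamDensity C F θ) F :=
  rfl

variable [Nonempty (Fin m)]

lemma partition_pos (θ : Fin n → ℝ) : 0 < ∑ y, Real.exp (C y + ∑ i, θ i * F i y) :=
  Finset.sum_pos (fun _ _ => Real.exp_pos _) Finset.univ_nonempty

lemma expFamDensity_eq_div (θ : Fin n → ℝ) (x : Fin m) :
    expFamDensity C F θ x =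
      Real.exp (C x + ∑ i, θ i * F i x) / ∑ y, Real.exp (C y + ∑ i, θ i * F i y) := by
  rw [expFamDensity, Real.exp_sub, Real.exp_log (partition_pos C F θ)]

lemma sum_expFamDensity (θ : Fin n → ℝ) : ∑ x, expFamDensity C F θ x = 1 := by
  simp only [expFamDensity_eq_div, ← Finset.sum_div, div_self (partition_pos C F θ).ne']

lemma hasFDerivAt_expFamDensity (θ : Fin n → ℝ) (x : Fin m) :
    HasFDerivAt (fun θ => expFamDensity C F θ x)
      (expFamDensity C F θ x •
        (statPairing F x - ∑ y, expFamDensity C F θ y • statPairing F y)) θ := by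
  have hZ := partition_pos C F θ
  have hlogZ := (HasFDerivAt.fun_sum fun y _ => (hasFDerivAt_exponent C F θ y).exp).log hZ.ne'
  have hmean : (∑ y, Real.exp (C y + ∑ i, θ i * F i y))⁻¹ •
      ∑ y, Real.exp (C y + ∑ i, θ i * F i y) • statPairing F y =
        ∑ y, expFamDensity C F θ y • statPairing F y := by
    simp only [Finset.smul_sum, smul_smul, expFamDensity_eq_div, div_eq_inv_mul]
  rw [hmean] at hlogZ
  exact ((hasFDerivAt_exponent C F θ x).sub hlogZ).exp

lemma fderiv_mean_expFamDensity (X : Fin m → ℝ) (θ : Fin n → ℝ) (i : Fin n) :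
    fderiv ℝ (fun θ => mean (expFamDensity C F θ) X) θ (Pi.single i 1) =
      cov (expFamDensity C F θ) X (F i) := by
  have hmean : HasFDerivAt (fun θ => mean (expFamDensity C F θ) X)
      (∑ x, X x • expFamDensity C F θ x •
        (statPairing F x - ∑ y, expFamDensity C F θ y • statPairing F y)) θ :=
    HasFDerivAt.fun_sum fun x _ => (hasFDerivAt_expFamDensity C F θ x).const_mul (X x)
  rw [hmean.fderiv, cov_eq_sum_mul_sub_mean (sum_expFamDensity C F θ)]
  simp [statPairing_apply, mean, Pi.single_apply, mul_comm, mul_left_comm]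

end Density

end ExpFamily

open ExpFamily

/-- Cramér–Rao equality: for `X = a₀ + ∑ aᵢ Fᵢ ∈ A_E` and
`f(θ) = E_{p_θ}(X)`, the squared norm of the Riemannian gradient of `f` with respect to the
Fisher metric, namely `∑_{i,j} (h_F⁻¹)_{ij} ∂ᵢf ∂ⱼf`, equals the variance `V_{p_θ}(X)`. -/
theorem cramer_rao_equality
    {m n : ℕ} (C : Fin m → ℝ) (F : Fin n → Fin m → ℝ)
    (hindep : LinearIndependent ℝ (Fin.cons (fun _ => (1 : ℝ)) F : Fin (n + 1) → Fin m → ℝ))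
    (a₀ : ℝ) (a : Fin n → ℝ) (X : Fin m → ℝ)
    (hX : X = fun x => a₀ + ∑ i, a i * F i x)
    (f : (Fin n → ℝ) → ℝ)
    (hf : f = fun θ => ∑ x, X x * expFamDensity C F θ x)
    (θ : Fin n → ℝ) :
    ∑ i, ∑ j, (fisherMatrix C F θ)⁻¹ i j *
        (fderiv ℝ f θ (Pi.single i 1)) * (fderiv ℝ f θ (Pi.single j 1)) =
      ∑ x, (X x - f θ) ^ 2 * expFamDensity C F θ x := by
  have : Nonempty (Fin m) := by
    by_contra hempty
    rw [not_nonempty_iff] at hempty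
    exact hindep.ne_zero 0 (Subsingleton.elim _ _)
  rw [fisherMatrix_eq_covMatrix]
  set p := expFamDensity C F θ
  have hp : ∑ x, p x = 1 := sum_expFamDensity C F θ
  have hG : (covMatrix p F).PosDef := covMatrix_posDef hp (expFamDensity_pos C F θ) hindep
  have hgrad (i : Fin n) : fderiv ℝ f θ (Pi.single i 1) = (covMatrix p F *ᵥ a) i := by
    rw [hf, covMatrix_mulVec hp F a₀, ← hX, cov_comm]
    exact fderiv_mean_expFamDensity C F X θ i
  simp only [hgrad]
  rw [Matrix.sum_inv_mul_mulVec_mul_mulVec hG.det_pos.ne'.isUnit,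
    dotProduct_covMatrix_mulVec hp F a₀, ← hX, cov_self, hf]
  rfl
end
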